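/- Let H be a bialgebra over a commutative ring R, n a natural number, and t^1, …, t^n : H → R R-linear functionals. Define d' : H → H^n by (d' a)_k = t^k_R(a) = Σ t^k(a_(1)) a_(2), the left H-action on H^n by (a • v)_k = a · v_k, and the right coaction Δ_R : H^n → (H ⊗ H)^n componentwise by (Δ_R v)_k = Δ(v_k). Then for all a, b ∈ H: Δ_R(a • d' b) = Δ(a) · ( Σ d'(b_(1)) ⊗ b_(2) ), meaning componentwise (Δ_R(a • d' b))_k = Δ(a) · (Σ t^k_R(b_(1)) ⊗ b_(2)). This is the right covariance of the first-order differential calculus expressed in the right-invariant basis (Proposition 5(ii)). -/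

import Mathlib

/-!
As `Δ` is multiplicative, `Δ(a · t_R b) = Δ(a) · Δ(t_R b)`, so it suffices that
`Δ ∘ t_R = (t_R ⊗ 1) ∘ Δ`: both `Δ(t_R b) = Σ t(b_(1)) Δ(b_(2))` and
`(t_R ⊗ 1)(Δ b) = Σ t_R(b_(1)) ⊗ b_(2)` equal `Σ t(b_(1)) b_(2) ⊗ b_(3)` by coassociativity.
-/

open TensorProduct

/-- The right-invariant vector field `t_R(a) = Σ t(a_(1)) a_(2)`. -/
noncomputable def tR (R C : Type*) [CommRing R] [AddCommGroup C] [Module R C]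
    [Coalgebra R C] (t : C →ₗ[R] R) : C →ₗ[R] C :=
  (TensorProduct.lid R C).toLinearMap ∘ₗ (LinearMap.rTensor C t) ∘ₗ Coalgebra.comul

namespace TensorProduct

variable {R M N P : Type*} [CommSemiring R] [AddCommMonoid M] [Module R M]
  [AddCommMonoid N] [Module R N] [AddCommMonoid P] [Module R P]

theorem comp_lid (f : M →ₗ[R] N) :
    f ∘ₗ (TensorProduct.lid R M).toLinearMap =
      (TensorProduct.lid R N).toLinearMap ∘ₗ f.lTensor R :=
  TensorProduct.ext' fun _ _ => by simp

theorem lid_comp_rTensor_comp_assoc (t : M →ₗ[R] R) :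
    (TensorProduct.lid R (N ⊗[R] P)).toLinearMap ∘ₗ t.rTensor (N ⊗[R] P) ∘ₗ
        (TensorProduct.assoc R M N P).toLinearMap =
      ((TensorProduct.lid R N).toLinearMap ∘ₗ t.rTensor N).rTensor P :=
  TensorProduct.ext_threefold fun _ _ _ => by simp [smul_tmul']

end TensorProduct

open LinearMap Coalgebra in
theorem comul_comp_tR (R C : Type*) [CommRing R] [AddCommGroup C] [Module R C]
    [Coalgebra R C] (t : C →ₗ[R] R) :
    comul ∘ₗ tR R C t = (tR R C t).rTensor C ∘ₗ comul := by
  calc comul ∘ₗ (TensorProduct.lid R C).toLinearMap ∘ₗ t.rTensor C ∘ₗ comul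
      = (TensorProduct.lid R (C ⊗[R] C)).toLinearMap ∘ₗ (comul (R := R)).lTensor R ∘ₗ
          t.rTensor C ∘ₗ comul := by
        rw [← comp_assoc, TensorProduct.comp_lid, comp_assoc]
    _ = (TensorProduct.lid R (C ⊗[R] C)).toLinearMap ∘ₗ t.rTensor (C ⊗[R] C) ∘ₗ
          (comul (R := R)).lTensor C ∘ₗ comul := by
        congr 1
        rw [← comp_assoc, ← comp_assoc, lTensor_comp_rTensor, rTensor_comp_lTensor]
    _ = (TensorProduct.lid R (C ⊗[R] C)).toLinearMap ∘ₗ t.rTensor (C ⊗[R] C) ∘ₗ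
          (TensorProduct.assoc R C C C).toLinearMap ∘ₗ (comul (R := R)).rTensor C ∘ₗ comul := by
        rw [← coassoc]
    _ = ((TensorProduct.lid R C).toLinearMap ∘ₗ t.rTensor C).rTensor C ∘ₗ
          (comul (R := R)).rTensor C ∘ₗ comul := by
        rw [← lid_comp_rTensor_comp_assoc]
        simp only [comp_assoc]
    _ = ((TensorProduct.lid R C).toLinearMap ∘ₗ t.rTensor C ∘ₗ comul).rTensor C ∘ₗ comul := by
        rw [← comp_assoc, ← rTensor_comp, comp_assoc]

/-- right covariance of the first-order differential calculus
`d' a = (t^1_R a, …, t^n_R a)` in the right-invariant basis: componentwise,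
`Δ_R(a • d' b)_k = Δ(a * t^k_R b) = Δ(a) · (Σ t^k_R(b_(1)) ⊗ b_(2))`. -/
theorem right_covariance (R H : Type*) [CommRing R] [Ring H] [Bialgebra R H]
    {n : ℕ} (t : Fin n → (H →ₗ[R] R)) :
    ∀ (a b : H) (k : Fin n),
      Coalgebra.comul (R := R) (a * tR R H (t k) b) =
        Coalgebra.comul (R := R) a *
          (LinearMap.rTensor H (tR R H (t k)) (Coalgebra.comul (R := R) b)) := by
  intro a b k
  rw [Bialgebra.comul_mul, ← LinearMap.comp_apply, comul_comp_tR, LinearMap.comp_apply]
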